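/- Let κ be a regular cardinal and M a κ-presented module. Then every κ-generated direct summand of M is κ-presented. -/

import Mathlib

/-!
Compose a presentation `F → M` with the projection `M → N` along a complement `N'`: the kernel
is the preimage of `N'`, generated by a lift of generators of `N'` together with the kernel of
`F → M`, so it is `κ`-generated. A Schanuel-type comparison then transfers this bound to the
presentation of `N` by the free module on `κ` generators of `N`.
-/

/-- A module is `κ`-generated if it has a generating set of cardinality at most `κ`. -/
def IsGenerated (κ : Cardinal.{u}) (R : Type u) [Ring R]
    (M : Type u) [AddCommGroup M] [Module R M] : Prop :=
  ∃ S : Set M, Cardinal.mk S ≤ κ ∧ Submodule.span R S = ⊤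

/-- A module is `κ`-presented if it is `κ`-generated and admits a free presentation
with `κ`-generated kernel. -/
def IsPresented (κ : Cardinal.{u}) (R : Type u) [Ring R]
    (M : Type u) [AddCommGroup M] [Module R M] : Prop :=
  IsGenerated κ R M ∧
    ∃ (ι : Type u) (f : (ι →₀ R) →ₗ[R] M), Function.Surjective f ∧
      IsGenerated κ R (LinearMap.ker f)

open Submodule LinearMap Cardinal

section SpanRank

variable {R : Type*} [Ring R] {F G M N : Type v} [AddCommGroup F] [Module R F]
  [AddCommGroup G] [Module R G] [AddCommGroup M] [Module R M] [AddCommGroup N] [Module R N]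

theorem Submodule.spanRank_comap_le {f : M →ₗ[R] N} {Q : Submodule R N}
    (hQ : Q ≤ range f) : (Q.comap f).spanRank ≤ Q.spanRank + (ker f).spanRank := by
  obtain ⟨s, hs, rfl⟩ := Q.exists_span_set_card_eq_spanRank
  have hs_range : s ⊆ Set.range f := coe_range f ▸ subset_span.trans hQ
  obtain ⟨t, rfl, ht⟩ := Set.exists_image_eq_injOn_of_subset_range hs_range
  rw [← hs, span_image, comap_map_eq, mk_image_eq_of_injOn _ _ ht]
  exact spanRank_sup_le_sum_spanRank.trans (add_le_add_left (spanRank_span_le_card t) _)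

theorem Submodule.spanRank_ker_le_of_projective [Module.Projective R F] [Module.Projective R G]
    {f : F →ₗ[R] N} {g : G →ₗ[R] N} (hf : Function.Surjective f) (hg : Function.Surjective g) :
    (ker g).spanRank ≤ (⊤ : Submodule R G).spanRank + (ker f).spanRank := by
  obtain ⟨τ, hτ⟩ := Module.projective_lifting_property f g hf
  obtain ⟨σ, hσ⟩ := Module.projective_lifting_property g f hg
  have hker : ker g = range (LinearMap.id - σ ∘ₗ τ) ⊔ (ker f).map σ := by
    refine le_antisymm (fun x hx => ?_) (sup_le ?_ ?_)
    · have hτx : τ x ∈ ker f := by rwa [mem_ker, ← comp_apply, hτ]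
      rw [show x = (x - σ (τ x)) + σ (τ x) by abel]
      exact add_mem_sup ⟨x, rfl⟩ (mem_map_of_mem hτx)
    · rintro _ ⟨x, rfl⟩
      simp [mem_ker, ← comp_apply g σ, hσ, ← comp_apply f τ, hτ]
    · rintro _ ⟨x, hx, rfl⟩
      rwa [mem_ker, ← comp_apply, hσ]
  rw [hker]
  exact spanRank_sup_le_sum_spanRank.trans
    (add_le_add (spanRank_range_le _) (spanRank_map_le _ _))

end SpanRank

variable {R : Type u} [Ring R] {M N : Type u} [AddCommGroup M] [Module R M]
  [AddCommGroup N] [Module R N] {κ : Cardinal.{u}}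

theorem Finsupp.spanRank_top_le (S : Type u) :
    (⊤ : Submodule R (S →₀ R)).spanRank ≤ #S := by
  rw [← (Finsupp.basisSingleOne (R := R) (ι := S)).span_eq]
  exact (spanRank_span_le_card _).trans mk_range_le

theorem isGenerated_iff_spanRank_top_le :
    IsGenerated κ R M ↔ (⊤ : Submodule R M).spanRank ≤ κ :=
  (FG.spanRank_le_iff_exists_span_set_card_le ⊤).symm

theorem isGenerated_submodule_iff_spanRank_le (P : Submodule R M) :
    IsGenerated κ R P ↔ P.spanRank ≤ κ := by
  rw [isGenerated_iff_spanRank_top_le, spanRank_top]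

theorem isPresented_of_surjective_of_projective (hκ : ℵ₀ ≤ κ) (hN : IsGenerated κ R N)
    {F : Type u} [AddCommGroup F] [Module R F] [Module.Projective R F] {f : F →ₗ[R] N}
    (hf : Function.Surjective f) (hker : (ker f).spanRank ≤ κ) : IsPresented κ R N := by
  obtain ⟨S, hS, hspan⟩ := hN
  let g : (S →₀ R) →ₗ[R] N := Finsupp.linearCombination R (↑)
  have hg : Function.Surjective g := by
    rw [← range_eq_top, Finsupp.range_linearCombination, Subtype.range_coe, hspan]
  refine ⟨⟨S, hS, hspan⟩, S, g, hg, (isGenerated_submodule_iff_spanRank_le _).2 ?_⟩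
  calc (ker g).spanRank ≤ (⊤ : Submodule R (S →₀ R)).spanRank + (ker f).spanRank :=
        spanRank_ker_le_of_projective hf hg
    _ ≤ κ + κ := add_le_add ((Finsupp.spanRank_top_le S).trans hS) hker
    _ = κ := add_eq_self hκ

/-- Every `κ`-generated direct summand of a `κ`-presented module is `κ`-presented. -/
theorem stmt4
    {R : Type u} [Ring R] {M : Type u} [AddCommGroup M] [Module R M]
    (κ : Cardinal.{u}) (hκ : κ.IsRegular)
    (hM : IsPresented κ R M)
    (N : Submodule R M) (hsum : ∃ N' : Submodule R M, IsCompl N N')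
    (hgen : IsGenerated κ R N) :
    IsPresented κ R N := by
  obtain ⟨hMgen, ι, f, hf, hker⟩ := hM
  obtain ⟨N', hc⟩ := hsum
  rw [isGenerated_iff_spanRank_top_le] at hMgen
  rw [isGenerated_submodule_iff_spanRank_le] at hker
  have hN' : N'.spanRank ≤ κ := by
    simpa only [range_projectionOnto, spanRank_top] using
      (spanRank_range_le (N'.projectionOnto N hc.symm)).trans hMgen
  refine isPresented_of_surjective_of_projective (f := N.projectionOnto N' hc ∘ₗ f)
    hκ.aleph0_le hgen ((projectionOnto_surjective hc).comp hf) ?_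
  rw [ker_comp, ker_projectionOnto]
  calc (N'.comap f).spanRank ≤ N'.spanRank + (ker f).spanRank :=
        spanRank_comap_le (by rw [range_eq_top.2 hf]; exact le_top)
    _ ≤ κ + κ := add_le_add hN' hker
    _ = κ := add_eq_self hκ.aleph0_le
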